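/- Let K be a finite extension of ℚ_p, n > 1 a natural number, and k > v(n). Setting k' = k + v(n), the map x ↦ x^n is a bijection from K^(k) onto P_n^(k'), where for a set X ⊆ K, X^(k) = {x ∈ X : x ≠ 0 and v(π^{-v(x)}·x − 1) ≥ k} and P_n = {x ∈ K× : ∃ y ∈ K, y^n = x}. -/

import Mathlib

/-- A normalized discrete valuation (with values in `WithTop ℤ`) on a finite extension `K`
of `ℚ_p`, compatible with the `p`-adic valuation up to a ramification index. -/
structure PadicStructure (p : ℕ) [Fact p.Prime] (K : Type*) [Field K] [Algebra ℚ_[p] K]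
    [FiniteDimensional ℚ_[p] K] where
  v : K → WithTop ℤ
  v_zero : v 0 = ⊤
  v_ne_top : ∀ {x : K}, x ≠ 0 → v x ≠ ⊤
  v_mul : ∀ x y : K, v (x * y) = v x + v y
  v_add : ∀ x y : K, min (v x) (v y) ≤ v (x + y)
  ramification : ∃ e : ℕ, 0 < e ∧
    ∀ x : ℚ_[p], x ≠ 0 → v (algebraMap ℚ_[p] K x) = (((e : ℤ) * x.valuation : ℤ) : WithTop ℤ)

namespace PadicStructure

variable {p : ℕ} [Fact p.Prime] {K : Type*} [Field K] [Algebra ℚ_[p] K]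
  [FiniteDimensional ℚ_[p] K] (V : PadicStructure p K)

/-- The valuation ring `R = {x : v x ≥ 0}`. -/
def R : Set K := {x | 0 ≤ V.v x}

/-- `P n`, the set of nonzero `n`-th powers of `K`. -/
def P (_W : PadicStructure p K) (n : ℕ) : Set K := {x | x ≠ 0 ∧ ∃ y : K, y ^ n = x}

/-- `X^(k)`: elements `x ≠ 0` of `X` with `v (π ^ (-v x) * x - 1) ≥ k`. -/
def shift (π : K) (X : Set K) (k : ℕ) : Set K :=
  {x | x ∈ X ∧ x ≠ 0 ∧ ∀ s : ℤ, V.v x = (s : WithTop ℤ) →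
    ((k : ℤ) : WithTop ℤ) ≤ V.v (π ^ (-s) * x - 1)}

/-- `K^(k)`. -/
def Kshift (π : K) (k : ℕ) : Set K := V.shift π Set.univ k

end PadicStructure

/-- Semi-algebraic subsets of `K^m`: Boolean combinations of sets `{x : f x ∈ P n}`. -/
inductive IsSA (K : Type*) [Field K] : {m : ℕ} → Set (Fin m → K) → Prop
  | basic {m : ℕ} (f : MvPolynomial (Fin m) K) (n : ℕ) (hn : 0 < n) :
      IsSA K {x | MvPolynomial.eval x f ≠ 0 ∧ ∃ y : K, y ^ n = MvPolynomial.eval x f}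
  | compl {m : ℕ} {A : Set (Fin m → K)} : IsSA K A → IsSA K Aᶜ
  | union {m : ℕ} {A B : Set (Fin m → K)} : IsSA K A → IsSA K B → IsSA K (A ∪ B)

/-- A semi-algebraic bijection (isomorphism) between `X ⊆ K^n` and `Y ⊆ K^m`:
a bijection whose graph is semi-algebraic. -/
def SAIso (K : Type*) [Field K] {n m : ℕ} (X : Set (Fin n → K)) (Y : Set (Fin m → K)) : Prop :=
  ∃ f : (Fin n → K) → (Fin m → K), Set.BijOn f X Y ∧
    IsSA K {z : Fin (n + m) → K |
      (fun i => z (Fin.castAdd m i)) ∈ X ∧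
      f (fun i => z (Fin.castAdd m i)) = fun j => z (Fin.natAdd n j)}

/-!
Write `x = π ^ s * a` with `s = v x`; then `x ∈ K^(k)` says exactly that `a` lies in the
principal units `U_k = {a : v (a - 1) ≥ k}`, and `x ^ n = π ^ (n s) * a ^ n`. So everything
reduces to `a ↦ a ^ n` mapping `U_k` bijectively onto `U_(k + v n)`.

For `a, b ∈ U_k` we have `a ^ n - b ^ n = (a - b) * (n + c)` with `v c ≥ k > v n`, so the power
map multiplies distances by exactly `|n|`: this gives the inclusion and injectivity. For
surjectivity onto `u`, the map `a ↦ a - (a ^ n - u) / n` is a contraction of the closed ball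
`U_k`, and `K` is complete for the absolute value of `v`, being finite-dimensional over `ℚ_p`;
its fixed point is an `n`-th root of `u`.
-/

def nthRootStep {K : Type*} [Field K] (n : ℕ) (u a : K) : K := a - (a ^ n - u) / n

lemma nthRootStep_eq_self_iff {K : Type*} [Field K] {n : ℕ} (hn : (n : K) ≠ 0) {u a : K} :
    nthRootStep n u a = a ↔ a ^ n = u := by
  simp [nthRootStep, hn, sub_eq_zero]

namespace AddValuation

section Field

variable {K : Type*} [Field K] (v : AddValuation K (WithTop ℤ))

def principalUnits (k : ℕ) : Submonoid K where
  carrier := {a | ((k : ℤ) : WithTop ℤ) ≤ v (a - 1)}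
  one_mem' := by simp
  mul_mem' {a b} ha hb := by
    have ha₀ : 0 ≤ v a := by
      simpa using v.map_le_add (le_trans (by exact_mod_cast k.cast_nonneg) ha) v.map_one.ge
    simp only [Set.mem_ofPred_eq, show a * b - 1 = a * (b - 1) + (a - 1) by ring]
    refine v.map_le_add ?_ ha
    simpa [v.map_mul] using add_le_add ha₀ hb

variable {v}

lemma ne_zero_of_eq_coe {x : K} {s : ℤ} (h : v x = s) : x ≠ 0 :=
  v.ne_top_iff.mp (h ▸ WithTop.coe_ne_top)

lemma exists_eq_coe_of_ne_zero {x : K} (hx : x ≠ 0) : ∃ s : ℤ, v x = s :=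
  (WithTop.ne_top_iff_exists.mp (v.ne_top_iff.mpr hx)).imp fun _ h ↦ h.symm

lemma map_pow_of_eq {x : K} {s : ℤ} (h : v x = s) (n : ℕ) :
    v (x ^ n) = ((n * s : ℤ) : WithTop ℤ) := by
  rw [v.map_pow, h, ← WithTop.coe_nsmul, nsmul_eq_mul]

lemma map_zpow_of_eq {x : K} {s : ℤ} (h : v x = s) (m : ℤ) :
    v (x ^ m) = ((m * s : ℤ) : WithTop ℤ) := by
  obtain ⟨j, rfl | rfl⟩ := Int.eq_nat_or_neg m
  · rw [zpow_natCast, map_pow_of_eq h]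
  · rw [zpow_neg, zpow_natCast, v.map_inv, map_pow_of_eq h,
      ← WithTop.LinearOrderedAddCommGroup.coe_neg, neg_mul]

lemma mem_principalUnits {a : K} {k : ℕ} :
    a ∈ v.principalUnits k ↔ ((k : ℤ) : WithTop ℤ) ≤ v (a - 1) := Iff.rfl

lemma map_eq_zero_of_mem_principalUnits {a : K} {k : ℕ} (hk : 0 < k)
    (ha : a ∈ v.principalUnits k) : v a = 0 := by
  have : v 1 < v (a - 1) := lt_of_lt_of_le (by simpa using hk) ha
  simpa using v.map_add_eq_of_lt_left this

lemma le_map_pow_sub_pow_sub_mul {a b : K} {k : ℕ} (ha : a ∈ v.principalUnits k)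
    (hb : b ∈ v.principalUnits k) (n : ℕ) :
    v (a - b) + (k : ℤ) ≤ v (a ^ n - b ^ n - n * (a - b)) := by
  have hsum : a ^ n - b ^ n - n * (a - b) =
      (a - b) * ∑ i ∈ Finset.range n, (a ^ i * b ^ (n - 1 - i) - 1) := by
    rw [← geom_sum₂_mul, Finset.sum_sub_distrib]
    simp only [Finset.sum_const, Finset.card_range, nsmul_eq_mul, mul_one]
    ring
  rw [hsum, v.map_mul]
  gcongr
  exact v.map_le_sum fun i _ ↦ mul_mem (pow_mem ha i) (pow_mem hb _)

variable {n vn k : ℕ}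

lemma le_map_pow_sub_one_sub_mul (hk : vn ≤ k) {a : K} (ha : a ∈ v.principalUnits k) :
    (((k + vn : ℕ) : ℤ) : WithTop ℤ) ≤ v (a ^ n - 1 - n * (a - 1)) := by
  have hE := le_map_pow_sub_pow_sub_mul ha (one_mem _) n
  rw [one_pow] at hE
  calc (((k + vn : ℕ) : ℤ) : WithTop ℤ) ≤ ((k : ℤ) : WithTop ℤ) + ((k : ℤ) : WithTop ℤ) := by
        exact_mod_cast (by omega : k + vn ≤ k + k)
    _ ≤ v (a - 1) + (k : ℤ) := by gcongr; exact ha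
    _ ≤ _ := hE

variable (hvn : v (n : K) = ((vn : ℤ) : WithTop ℤ))
include hvn

lemma natCast_ne_zero_of_map_eq : (n : K) ≠ 0 :=
  ne_zero_of_eq_coe hvn

lemma le_map_of_add_le_map_natCast_mul {c : WithTop ℤ} {x : K}
    (h : c + ((vn : ℤ) : WithTop ℤ) ≤ v (n * x)) : c ≤ v x := by
  rw [v.map_mul, hvn, add_comm] at h
  exact (WithTop.add_le_add_iff_left WithTop.coe_ne_top).mp h

lemma pow_mem_principalUnits (hk : vn ≤ k) {a : K} (ha : a ∈ v.principalUnits k) :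
    a ^ n ∈ v.principalUnits (k + vn) := by
  rw [mem_principalUnits, show a ^ n - 1 = n * (a - 1) + (a ^ n - 1 - n * (a - 1)) by ring]
  refine v.map_le_add ?_ (le_map_pow_sub_one_sub_mul hk ha)
  rw [v.map_mul, hvn, add_comm]
  push_cast
  gcongr
  exact_mod_cast ha

lemma injOn_pow_principalUnits (hk : vn < k) :
    Set.InjOn (· ^ n) (v.principalUnits k : Set K) := by
  intro a ha b hb hab
  by_contra hne
  obtain ⟨t, ht⟩ := exists_eq_coe_of_ne_zero (v := v) (sub_ne_zero.mpr hne)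
  have hE := le_map_pow_sub_pow_sub_mul ha hb n
  rw [show a ^ n - b ^ n = 0 from sub_eq_zero.mpr hab, zero_sub, v.map_neg, v.map_mul, hvn,
    ht] at hE
  have : t + k ≤ vn + t := by exact_mod_cast hE
  omega

lemma nthRootStep_mem_principalUnits (hk : vn ≤ k) {u a : K}
    (hu : u ∈ v.principalUnits (k + vn)) (ha : a ∈ v.principalUnits k) :
    nthRootStep n u a ∈ v.principalUnits k := by
  have hn := natCast_ne_zero_of_map_eq hvn
  have h : n * (nthRootStep n u a - 1) = (u - 1) - (a ^ n - 1 - n * (a - 1)) := by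
    unfold nthRootStep; field_simp; ring
  apply le_map_of_add_le_map_natCast_mul hvn
  rw [h]
  exact v.map_le_sub (by exact_mod_cast hu) (by exact_mod_cast le_map_pow_sub_one_sub_mul hk ha)

lemma add_one_le_map_nthRootStep_sub (hk : vn < k) {u a b : K}
    (ha : a ∈ v.principalUnits k) (hb : b ∈ v.principalUnits k) :
    v (a - b) + 1 ≤ v (nthRootStep n u a - nthRootStep n u b) := by
  have hn := natCast_ne_zero_of_map_eq hvn
  have h : n * (nthRootStep n u a - nthRootStep n u b) = -(a ^ n - b ^ n - n * (a - b)) := by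
    unfold nthRootStep; field_simp; ring
  apply le_map_of_add_le_map_natCast_mul hvn
  rw [h, v.map_neg]
  calc v (a - b) + 1 + ((vn : ℤ) : WithTop ℤ) = v (a - b) + ((1 + vn : ℤ) : WithTop ℤ) := by
        rw [add_assoc]; rfl
    _ ≤ v (a - b) + (k : ℤ) := by gcongr; exact_mod_cast (by omega : 1 + (vn : ℤ) ≤ k)
    _ ≤ _ := le_map_pow_sub_pow_sub_mul ha hb n

end Field

section AbsoluteValue

variable {K : Type*} [Field K] (v : AddValuation K (WithTop ℤ)) {ρ : ℝ}
  (hρ0 : 0 < ρ) (hρ1 : ρ ≤ 1)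

open Classical in
noncomputable def absoluteValue : AbsoluteValue K ℝ where
  toFun x := if x = 0 then 0 else ρ ^ (v x).untopD 0
  map_mul' x y := by
    by_cases hx : x = 0
    · simp [hx]
    by_cases hy : y = 0
    · simp [hy]
    obtain ⟨s, hs⟩ := exists_eq_coe_of_ne_zero (v := v) hx
    obtain ⟨t, ht⟩ := exists_eq_coe_of_ne_zero (v := v) hy
    simp [hx, hy, v.map_mul, hs, ht, ← WithTop.coe_add, zpow_add₀ hρ0.ne']
  nonneg' x := by
    split_ifs
    exacts [le_rfl, zpow_nonneg hρ0.le _]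
  eq_zero' x := by simp [zpow_ne_zero _ hρ0.ne']
  add_le' x y := by
    have hnonneg (z : K) : 0 ≤ if z = 0 then (0 : ℝ) else ρ ^ (v z).untopD 0 := by
      split_ifs
      exacts [le_rfl, zpow_nonneg hρ0.le _]
    wlog h : v x ≤ v (x + y) generalizing x y
    · rw [add_comm x y, add_comm (ite _ _ _)]
      exact this y x (add_comm x y ▸ (v.map_add' x y).resolve_left h)
    by_cases hxy : x + y = 0
    · simpa [hxy] using add_nonneg (hnonneg x) (hnonneg y)
    have hx : x ≠ 0 := by
      rintro rfl
      simp_all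
    obtain ⟨s, hs⟩ := exists_eq_coe_of_ne_zero (v := v) hx
    obtain ⟨t, ht⟩ := exists_eq_coe_of_ne_zero (v := v) hxy
    rw [hs, ht, WithTop.coe_le_coe] at h
    simp only [hx, hxy, if_false, hs, ht, WithTop.untopD_coe]
    exact le_add_of_le_of_nonneg (zpow_le_zpow_right_of_le_one₀ hρ0 hρ1 h) (hnonneg y)

lemma absoluteValue_apply_of_eq {x : K} {s : ℤ} (h : v x = s) :
    v.absoluteValue hρ0 hρ1 x = ρ ^ s := by
  simp [absoluteValue, ne_zero_of_eq_coe h, h]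

end AbsoluteValue

section Complete

variable {K : Type*} [NormedField K] {v : AddValuation K (WithTop ℤ)} {ρ : ℝ}
  (hρ0 : 0 < ρ) (hρ1 : ρ < 1) (hnorm : ∀ (x : K) (s : ℤ), v x = s → ‖x‖ = ρ ^ s)
include hρ0 hρ1 hnorm

lemma norm_le_zpow_iff {x : K} {m : ℤ} : ‖x‖ ≤ ρ ^ m ↔ (m : WithTop ℤ) ≤ v x := by
  by_cases hx : x = 0
  · simp [hx, zpow_nonneg hρ0.le]
  obtain ⟨s, hs⟩ := exists_eq_coe_of_ne_zero (v := v) hx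
  rw [hnorm x s hs, hs, WithTop.coe_le_coe, zpow_le_zpow_iff_right_of_lt_one₀ hρ0 hρ1]

lemma norm_le_mul_of_add_one_le {x y : K} (h : v y + 1 ≤ v x) : ‖x‖ ≤ ρ * ‖y‖ := by
  by_cases hy : y = 0
  · simp_all
  obtain ⟨s, hs⟩ := exists_eq_coe_of_ne_zero (v := v) hy
  rw [hnorm y s hs, ← zpow_one_add₀ hρ0.ne', norm_le_zpow_iff hρ0 hρ1 hnorm, add_comm,
    WithTop.coe_add, ← hs]
  exact h

lemma principalUnits_eq_closedBall (k : ℕ) :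
    (v.principalUnits k : Set K) = Metric.closedBall 1 (ρ ^ (k : ℤ)) := by
  ext a
  rw [Metric.mem_closedBall, dist_eq_norm, norm_le_zpow_iff hρ0 hρ1 hnorm]
  rfl

variable [CompleteSpace K] {n vn k : ℕ} (hvn : v (n : K) = ((vn : ℤ) : WithTop ℤ))
include hvn

theorem exists_pow_eq_of_mem_principalUnits (hk : vn < k) {u : K}
    (hu : u ∈ v.principalUnits (k + vn)) : ∃ a ∈ v.principalUnits k, a ^ n = u := by
  have hmaps : Set.MapsTo (nthRootStep n u) (v.principalUnits k) (v.principalUnits k) :=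
    fun a ha ↦ nthRootStep_mem_principalUnits hvn hk.le hu ha
  have hcontr : ContractingWith ⟨ρ, hρ0.le⟩ (hmaps.restrict _ _ _) := by
    refine ⟨hρ1, LipschitzWith.of_dist_le_mul fun a b ↦ ?_⟩
    simp only [Subtype.dist_eq, dist_eq_norm, Set.MapsTo.val_restrict_apply]
    exact norm_le_mul_of_add_one_le hρ0 hρ1 hnorm
      (add_one_le_map_nthRootStep_sub hvn hk a.2 b.2)
  have hcomplete : IsComplete (v.principalUnits k : Set K) := by
    rw [principalUnits_eq_closedBall hρ0 hρ1 hnorm]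
    exact Metric.isClosed_closedBall.isComplete
  obtain ⟨a, ha, hfix, -⟩ := hcontr.exists_fixedPoint' hcomplete hmaps (one_mem _)
    (edist_ne_top _ _)
  exact ⟨a, ha, (nthRootStep_eq_self_iff (natCast_ne_zero_of_map_eq hvn)).mp hfix⟩

end Complete

end AddValuation

namespace PadicStructure

variable {p : ℕ} [Fact p.Prime] {K : Type*} [Field K] [Algebra ℚ_[p] K]
  [FiniteDimensional ℚ_[p] K] (V : PadicStructure p K)

lemma v_one : V.v 1 = 0 := by
  obtain ⟨s, hs⟩ := WithTop.ne_top_iff_exists.mp (V.v_ne_top one_ne_zero)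
  have h := V.v_mul 1 1
  rw [one_mul, ← hs, ← WithTop.coe_add, WithTop.coe_inj] at h
  rw [← hs, show s = 0 by omega]
  rfl

def toAddValuation : AddValuation K (WithTop ℤ) :=
  AddValuation.of V.v V.v_zero V.v_one V.v_add V.v_mul

@[simp]
lemma toAddValuation_apply (x : K) : V.toAddValuation x = V.v x := rfl

theorem exists_pow_eq_of_mem_principalUnits {n vn k : ℕ}
    (hvn : V.v (n : K) = ((vn : ℤ) : WithTop ℤ)) (hk : vn < k) {u : K}
    (hu : u ∈ V.toAddValuation.principalUnits (k + vn)) :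
    ∃ a ∈ V.toAddValuation.principalUnits k, a ^ n = u := by
  obtain ⟨e, he, hram⟩ := V.ramification
  have hp : (1 : ℝ) < p := by exact_mod_cast (Fact.out : p.Prime).one_lt
  -- `ρ ^ e = p⁻¹` makes the absolute value of `v` extend the norm of `ℚ_p`.
  set ρ : ℝ := (p : ℝ) ^ (-(e : ℝ)⁻¹)
  have hρ0 : 0 < ρ := Real.rpow_pos_of_pos (by linarith) _
  have hρ1 : ρ < 1 := Real.rpow_lt_one_of_one_lt_of_neg hp (by simp; exact_mod_cast he)
  have hρe : ρ ^ e = (p : ℝ)⁻¹ := by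
    rw [← Real.rpow_mul_natCast (by positivity), neg_mul, inv_mul_cancel₀ (by positivity),
      Real.rpow_neg_one]
  let _ : NormedField K := (V.toAddValuation.absoluteValue hρ0 hρ1.le).toNormedField
  have hnorm : ∀ (x : K) (s : ℤ), V.toAddValuation x = s → ‖x‖ = ρ ^ s :=
    fun _ _ ↦ V.toAddValuation.absoluteValue_apply_of_eq hρ0 hρ1.le
  let _ : NormedSpace ℚ_[p] K := ⟨fun c x ↦ by
    rw [Algebra.smul_def, norm_mul]
    by_cases hc : c = 0
    · simp [hc]
    rw [hnorm _ _ (hram c hc), zpow_mul, zpow_natCast, hρe, Padic.norm_eq_zpow_neg_valuation hc,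
      inv_zpow']⟩
  have : CompleteSpace K := FiniteDimensional.complete ℚ_[p] K
  exact AddValuation.exists_pow_eq_of_mem_principalUnits hρ0 hρ1 hnorm hvn hk hu

lemma mem_shift_iff {π : K} {X : Set K} {k : ℕ} {x : K} {s : ℤ} (hs : V.v x = s) :
    x ∈ V.shift π X k ↔ x ∈ X ∧ π ^ (-s) * x ∈ V.toAddValuation.principalUnits k := by
  refine ⟨fun ⟨hX, _, h⟩ ↦ ⟨hX, h s hs⟩, fun ⟨hX, h⟩ ↦ ⟨hX, ?_, fun t ht ↦ ?_⟩⟩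
  · exact AddValuation.ne_zero_of_eq_coe (v := V.toAddValuation) hs
  · rwa [← WithTop.coe_inj.mp (hs.symm.trans ht)]

lemma pow_mem_shift_iff {π : K} {X : Set K} {k : ℕ} {x : K} {s : ℤ} (hs : V.v x = s) (n : ℕ) :
    x ^ n ∈ V.shift π X k ↔
      x ^ n ∈ X ∧ (π ^ (-s) * x) ^ n ∈ V.toAddValuation.principalUnits k := by
  rw [V.mem_shift_iff (V.toAddValuation.map_pow_of_eq hs n), mul_pow, ← zpow_natCast (π ^ (-s)),
    ← zpow_mul, neg_mul, mul_comm s]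

variable {π : K} {n vn k : ℕ} (hvn : V.v (n : K) = ((vn : ℤ) : WithTop ℤ))
include hvn

lemma ne_zero_of_v_natCast_eq : n ≠ 0 := by
  rintro rfl
  exact AddValuation.natCast_ne_zero_of_map_eq (v := V.toAddValuation) hvn Nat.cast_zero

theorem mapsTo_pow_Kshift (hk : vn ≤ k) :
    Set.MapsTo (· ^ n) (V.Kshift π k) (V.shift π (V.P n) (k + vn)) := by
  intro x hx
  obtain ⟨s, hs⟩ := V.toAddValuation.exists_eq_coe_of_ne_zero hx.2.1
  refine (V.pow_mem_shift_iff hs n).mpr ⟨⟨pow_ne_zero n hx.2.1, x, rfl⟩, ?_⟩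
  exact AddValuation.pow_mem_principalUnits hvn hk ((V.mem_shift_iff hs).mp hx).2

theorem injOn_pow_Kshift (hπ : π ≠ 0) (hk : vn < k) : Set.InjOn (· ^ n) (V.Kshift π k) := by
  intro x hx y hy (hxy : x ^ n = y ^ n)
  obtain ⟨s, hs⟩ := V.toAddValuation.exists_eq_coe_of_ne_zero hx.2.1
  obtain ⟨t, ht⟩ := V.toAddValuation.exists_eq_coe_of_ne_zero hy.2.1
  have hst : s = t := by
    have h := V.toAddValuation.map_pow_of_eq hs n
    rw [hxy, V.toAddValuation.map_pow_of_eq ht, WithTop.coe_inj] at h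
    exact (mul_left_cancel₀ (by exact_mod_cast V.ne_zero_of_v_natCast_eq hvn) h).symm
  subst hst
  refine mul_left_cancel₀ (zpow_ne_zero (-s) hπ) (AddValuation.injOn_pow_principalUnits hvn hk
    ((V.mem_shift_iff hs).mp hx).2 ((V.mem_shift_iff ht).mp hy).2 ?_)
  simp only [mul_pow, hxy]

theorem surjOn_pow_Kshift (hπ : V.v π = ((1 : ℤ) : WithTop ℤ)) (hk : vn < k) :
    Set.SurjOn (· ^ n) (V.Kshift π k) (V.shift π (V.P n) (k + vn)) := by
  rintro z hz
  obtain ⟨⟨-, y, rfl⟩, hz0, -⟩ := id hz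
  have hπ0 : π ≠ 0 := AddValuation.ne_zero_of_eq_coe (v := V.toAddValuation) hπ
  obtain ⟨s, hs⟩ := V.toAddValuation.exists_eq_coe_of_ne_zero
    (ne_zero_pow (V.ne_zero_of_v_natCast_eq hvn) hz0)
  obtain ⟨a, ha, han⟩ := V.exists_pow_eq_of_mem_principalUnits hvn hk
    ((V.pow_mem_shift_iff hs n).mp hz).2
  have hva : V.v a = 0 := AddValuation.map_eq_zero_of_mem_principalUnits (by omega) ha
  refine ⟨π ^ s * a, (V.mem_shift_iff (s := s) ?_).mpr ⟨trivial, ?_⟩, ?_⟩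
  · rw [← toAddValuation_apply, AddValuation.map_mul, V.toAddValuation.map_zpow_of_eq hπ]
    simpa using hva
  · rwa [← mul_assoc, ← zpow_add₀ hπ0, neg_add_cancel, zpow_zero, one_mul]
  · change (π ^ s * a) ^ n = y ^ n
    rw [mul_pow, han, mul_pow, ← mul_assoc, ← mul_pow, ← zpow_add₀ hπ0, add_neg_cancel, zpow_zero,
      one_pow, one_mul]

end PadicStructure

theorem pow_bijOn_shift_general {p : ℕ} [Fact p.Prime] {K : Type*} [Field K] [Algebra ℚ_[p] K]
    [FiniteDimensional ℚ_[p] K] (V : PadicStructure p K)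
    (π : K) (hπ : V.v π = ((1 : ℤ) : WithTop ℤ))
    (n : ℕ)
    (vn : ℕ) (hvn : V.v (n : K) = ((vn : ℤ) : WithTop ℤ))
    (k : ℕ) (hk : vn < k) :
    Set.BijOn (fun x : K => x ^ n) (V.Kshift π k) (V.shift π (V.P n) (k + vn)) :=
  ⟨V.mapsTo_pow_Kshift hvn hk.le,
    V.injOn_pow_Kshift hvn (AddValuation.ne_zero_of_eq_coe (v := V.toAddValuation) hπ) hk,
    V.surjOn_pow_Kshift hvn hπ hk⟩

/-- The `n`-th power map is a bijection from `K^(k)` onto `P_n^(k + v n)`. -/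
theorem pow_bijOn_shift {p : ℕ} [Fact p.Prime] {K : Type*} [Field K] [Algebra ℚ_[p] K]
    [FiniteDimensional ℚ_[p] K] (V : PadicStructure p K)
    (π : K) (hπ : V.v π = ((1 : ℤ) : WithTop ℤ))
    (n : ℕ) (hn : 1 < n)
    (vn : ℕ) (hvn : V.v (n : K) = ((vn : ℤ) : WithTop ℤ))
    (k : ℕ) (hk : vn < k) :
    Set.BijOn (fun x : K => x ^ n) (V.Kshift π k) (V.shift π (V.P n) (k + vn)) :=
  pow_bijOn_shift_general V π hπ n vn hvn k hk
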